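/- Let f : [n] → [m] be an injective monotone (hence strictly increasing) map. Then for every monotone map g : [p] → [m], the pullback of the Whitney elementary form ω_f along g satisfies g*ω_f = Σ_h ω_h in Ω_p, where the sum runs over all monotone maps h : [n] → [p] with g ∘ h = f. -/

import Mathlib

noncomputable section

/-- The DG-algebra of polynomial differential forms on the standard
`m`-simplex, modelled as the exterior algebra over
`R = MvPolynomial (Fin m) K` of the free module `R^m`. -/
abbrev Omega (K : Type) [Field K] (m : ℕ) :=
  ExteriorAlgebra (MvPolynomial (Fin m) K) (Fin m → MvPolynomial (Fin m) K)

/-- The coordinates `x₀, x₁, …, x_m`, where `x₁, …, x_m` are the polynomial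
variables and `x₀ := 1 - (x₁ + ⋯ + x_m)`. -/
def xC (K : Type) [Field K] (m : ℕ) : Fin (m + 1) → MvPolynomial (Fin m) K :=
  Fin.cases (1 - ∑ i : Fin m, MvPolynomial.X i) (fun i => MvPolynomial.X i)

/-- The vectors of `R^m` representing `dx₀, dx₁, …, dx_m`: the standard basis
vectors for `dx₁, …, dx_m`, and `-(dx₁ + ⋯ + dx_m)` for `dx₀`. -/
def vDX (K : Type) [Field K] (m : ℕ) :
    Fin (m + 1) → (Fin m → MvPolynomial (Fin m) K) :=
  Fin.cases (-∑ i : Fin m, Pi.single i 1) (fun i => Pi.single i 1)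

/-- The one-forms `dx₀, dx₁, …, dx_m` in `Ω_m` (degree `1` elements of the
exterior algebra). -/
def dX (K : Type) [Field K] (m : ℕ) (j : Fin (m + 1)) : Omega K m :=
  ExteriorAlgebra.ι (MvPolynomial (Fin m) K) (vDX K m j)

/-- The Whitney elementary form
`ω_f = n! Σᵢ (-1)ⁱ x_{f i} dx_{f 0} ∧ ⋯ ∧ (omit dx_{f i}) ∧ ⋯ ∧ dx_{f n}`
associated to a map `f : [n] → [m]`. -/
def omegaF (K : Type) [Field K] {n m : ℕ} (f : Fin (n + 1) → Fin (m + 1)) :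
    Omega K m :=
  (n.factorial : MvPolynomial (Fin m) K) •
    ∑ i : Fin (n + 1),
      (-1 : MvPolynomial (Fin m) K) ^ (i : ℕ) •
        (algebraMap (MvPolynomial (Fin m) K) (Omega K m) (xC K m (f i)) *
          ((List.ofFn fun j : Fin (n + 1) => dX K m (f j)).eraseIdx (i : ℕ)).prod)

/-- On polynomials, the pullback along `g : [n] → [m]` substitutes
`x_j ↦ Σ_{i ∈ [n], g i = j} x_i`. -/
def pullbackPoly (K : Type) [Field K] {n m : ℕ}
    (g : Fin (n + 1) → Fin (m + 1)) :
    MvPolynomial (Fin m) K →ₐ[K] MvPolynomial (Fin n) K :=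
  MvPolynomial.aeval fun i : Fin m =>
    ∑ j ∈ Finset.univ.filter (fun j : Fin (n + 1) => g j = i.succ), xC K n j

/-- On one-forms, the pullback along `g : [n] → [m]` sends
`dx_j ↦ Σ_{i ∈ [n], g i = j} dx_i`; this is the corresponding vector. -/
def pullbackVec (K : Type) [Field K] {n m : ℕ}
    (g : Fin (n + 1) → Fin (m + 1)) (i : Fin m) :
    Fin n → MvPolynomial (Fin n) K :=
  ∑ j ∈ Finset.univ.filter (fun j : Fin (n + 1) => g j = i.succ), vDX K n j

/-- The pullback `g* : Ω_m → Ω_n` along a map `g : [n] → [m]`: the (unique)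
`K`-algebra homomorphism determined by `x_j ↦ Σ_{i ∈ [n], g i = j} x_i` and
`dx_j ↦ Σ_{i ∈ [n], g i = j} dx_i` for every `j ∈ [m]`. -/
def pullback (K : Type) [Field K] {n m : ℕ}
    (g : Fin (n + 1) → Fin (m + 1)) : Omega K m → Omega K n :=
  letI φ : MvPolynomial (Fin m) K →+* Omega K n :=
    (algebraMap (MvPolynomial (Fin n) K) (Omega K n)).comp
      (pullbackPoly K g).toRingHom
  letI hcomm : ∀ (c : MvPolynomial (Fin m) K) (x : Omega K n),
      φ c * x = x * φ c := fun c x => Algebra.commutes (pullbackPoly K g c) x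
  letI : Algebra (MvPolynomial (Fin m) K) (Omega K n) := φ.toAlgebra' hcomm
  letI L : (Fin m → MvPolynomial (Fin m) K) →ₗ[MvPolynomial (Fin m) K]
      Omega K n :=
    { toFun := fun v =>
        ExteriorAlgebra.ι (MvPolynomial (Fin n) K)
          (∑ i : Fin m, pullbackPoly K g (v i) • pullbackVec K g i)
      map_add' := by
        intro u v
        show ExteriorAlgebra.ι (MvPolynomial (Fin n) K)
            (∑ i : Fin m, pullbackPoly K g ((u + v) i) • pullbackVec K g i) =
          ExteriorAlgebra.ι (MvPolynomial (Fin n) K)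
              (∑ i : Fin m, pullbackPoly K g (u i) • pullbackVec K g i) +
            ExteriorAlgebra.ι (MvPolynomial (Fin n) K)
              (∑ i : Fin m, pullbackPoly K g (v i) • pullbackVec K g i)
        rw [← map_add, ← Finset.sum_add_distrib]
        exact congrArg _ (Finset.sum_congr rfl fun i _ => by
          simp [Pi.add_apply, map_add, add_smul])
      map_smul' := by
        intro c v
        show ExteriorAlgebra.ι (MvPolynomial (Fin n) K)
            (∑ i : Fin m, pullbackPoly K g ((c • v) i) • pullbackVec K g i) =
          algebraMap (MvPolynomial (Fin n) K) (Omega K n)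
              (pullbackPoly K g c) *
            ExteriorAlgebra.ι (MvPolynomial (Fin n) K)
              (∑ i : Fin m, pullbackPoly K g (v i) • pullbackVec K g i)
        rw [← Algebra.smul_def, ← map_smul, Finset.smul_sum]
        exact congrArg _ (Finset.sum_congr rfl fun i _ => by
          simp [Pi.smul_apply, smul_eq_mul, map_mul, smul_smul]) }
  (ExteriorAlgebra.lift (MvPolynomial (Fin m) K)
    ⟨L, fun v => ExteriorAlgebra.ι_sq_zero _⟩ :
      Omega K m →ₐ[MvPolynomial (Fin m) K] Omega K n)

/-! The pullback `g*` is a ring map with `g* x_j = Σ_{g a = j} x_a` and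
`g* dx_j = Σ_{g a = j} dx_a`. The `i`-th summand `x_{f i} ∏_{j ≠ i} dx_{f j}` of `ω_f` is a product
of one factor per `j ∈ [n]`, so expanding its pullback multilinearly gives one term for each choice
of `a_j ∈ g⁻¹(f j)`, i.e. for each `h` with `g ∘ h = f`, and that term is the `i`-th summand of
`ω_h`. Hence `g* ω_f = Σ_{g ∘ h = f} ω_h` for arbitrary `f` and `g`; when `f` is strictly increasing
and `g` monotone, every such `h` is monotone. -/

theorem StrictMono.of_comp_of_monotone {α β γ : Type*} [Preorder α] [LinearOrder β] [Preorder γ]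
    {h : α → β} {g : β → γ} (hg : Monotone g) (hgh : StrictMono (g ∘ h)) : StrictMono h := by
  intro a b hab
  by_contra! hba
  exact (hgh hab).not_ge (hg hba)

theorem List.eraseIdx_ofFn {α : Type*} {n : ℕ} (u : Fin (n + 1) → α) (i : Fin (n + 1)) :
    (List.ofFn u).eraseIdx i = List.ofFn fun j => u (i.succAbove j) := by
  refine List.ext_getElem (by simp [List.length_eraseIdx, Nat.lt_succ_iff.mp i.isLt])
    fun k _ _ => ?_
  simp only [List.getElem_eraseIdx, List.getElem_ofFn, Fin.succAbove, Fin.lt_def,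
    Fin.val_castSucc]
  split_ifs <;> rfl

theorem List.prod_ofFn_sum_comp_equiv {A ι α : Type*} [Semiring A] [Fintype ι] [DecidableEq ι]
    {k : ℕ} (σ : Fin k ≃ ι) (S : ι → Finset α) (u : ι → α → A) :
    (List.ofFn fun j => ∑ a ∈ S (σ j), u (σ j) a).prod =
      ∑ h ∈ Fintype.piFinset S, (List.ofFn fun j => u (σ j) (h (σ j))).prod :=
  ((MultilinearMap.mkPiAlgebraFin ℕ k A).domDomCongr σ).map_sum_finset u S

theorem Fin.sum_filter_eq_zero_add_sum_succ {M : Type*} [AddCommMonoid M] {n m : ℕ}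
    (g : Fin (n + 1) → Fin (m + 1)) (w : Fin (n + 1) → M) :
    ∑ a with g a = 0, w a + ∑ i : Fin m, ∑ a with g a = i.succ, w a = ∑ a, w a := by
  rw [← Fin.sum_univ_succ (f := fun j => ∑ a with g a = j, w a), Finset.sum_fiberwise]

section Pullback

variable (K : Type) [Field K] {n m : ℕ}

theorem sum_xC (n : ℕ) : ∑ a, xC K n a = 1 := by
  simp [Fin.sum_univ_succ, xC]

theorem sum_vDX (n : ℕ) : ∑ a, vDX K n a = 0 := by
  simp [Fin.sum_univ_succ, vDX]

theorem pullbackPoly_xC (g : Fin (n + 1) → Fin (m + 1)) (j : Fin (m + 1)) :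
    pullbackPoly K g (xC K m j) = ∑ a with g a = j, xC K n a := by
  cases j using Fin.cases with
  | zero =>
    have hfib := Fin.sum_filter_eq_zero_add_sum_succ g (xC K n)
    rw [sum_xC] at hfib
    simp only [xC, Fin.cases_zero, map_sub, map_one, map_sum, pullbackPoly, MvPolynomial.aeval_X]
    exact (eq_sub_of_add_eq hfib).symm
  | succ i => simp [xC, pullbackPoly]

theorem sum_pullbackPoly_smul_pullbackVec (g : Fin (n + 1) → Fin (m + 1)) (j : Fin (m + 1)) :
    ∑ i, pullbackPoly K g (vDX K m j i) • pullbackVec K g i = ∑ a with g a = j, vDX K n a := by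
  cases j using Fin.cases with
  | zero =>
    have hfib := Fin.sum_filter_eq_zero_add_sum_succ g (vDX K n)
    rw [sum_vDX] at hfib
    simp only [vDX, Fin.cases_zero, Pi.neg_apply, Finset.sum_apply, Pi.single_apply,
      Finset.sum_ite_eq, Finset.mem_univ, if_true, map_neg, map_one, neg_one_smul,
      Finset.sum_neg_distrib]
    exact (eq_neg_of_add_eq_zero_left hfib).symm
  | succ k => simp [vDX, Pi.single_apply, pullbackVec]

theorem pullback_dX (g : Fin (n + 1) → Fin (m + 1)) (j : Fin (m + 1)) :
    pullback K g (dX K m j) = ∑ a with g a = j, dX K n a := by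
  unfold pullback dX
  rw [ExteriorAlgebra.lift_ι_apply, ← map_sum]
  exact congrArg (ExteriorAlgebra.ι _) (sum_pullbackPoly_smul_pullbackVec K g j)

def pullbackRingHom (g : Fin (n + 1) → Fin (m + 1)) : Omega K m →+* Omega K n where
  toFun := pullback K g
  map_one' := by unfold pullback; exact map_one _
  map_mul' := by unfold pullback; exact map_mul _
  map_zero' := by unfold pullback; exact map_zero _
  map_add' := by unfold pullback; exact map_add _

@[simp]
theorem pullbackRingHom_apply (g : Fin (n + 1) → Fin (m + 1)) (x : Omega K m) :
    pullbackRingHom K g x = pullback K g x :=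
  rfl

theorem pullback_algebraMap (g : Fin (n + 1) → Fin (m + 1)) (c : MvPolynomial (Fin m) K) :
    pullback K g (algebraMap _ _ c) = algebraMap _ (Omega K n) (pullbackPoly K g c) := by
  let := ((algebraMap _ (Omega K n)).comp (pullbackPoly K g).toRingHom).toAlgebra'
    fun c x => Algebra.commutes (pullbackPoly K g c) x
  exact AlgHom.commutes _ c

end Pullback

section Whitney

variable (K : Type) [Field K] {n m p : ℕ}

def whitneyTerm (f : Fin (n + 1) → Fin (m + 1)) (i : Fin (n + 1)) : Omega K m :=
  algebraMap _ _ (xC K m (f i)) * ((List.ofFn fun j => dX K m (f j)).eraseIdx i).prod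

theorem omegaF_eq_sum_whitneyTerm (f : Fin (n + 1) → Fin (m + 1)) :
    omegaF K f = n.factorial • ∑ i : Fin (n + 1), (-1 : ℤ) ^ (i : ℕ) • whitneyTerm K f i := by
  rw [omegaF, Nat.cast_smul_eq_nsmul]
  congr 1
  refine Finset.sum_congr rfl fun i _ => ?_
  rw [whitneyTerm, ← Int.cast_smul_eq_zsmul (MvPolynomial (Fin m) K)]
  push_cast
  rfl

def whitneyFactor (i j : Fin (n + 1)) (a : Fin (m + 1)) : Omega K m :=
  if j = i then algebraMap _ _ (xC K m a) else dX K m a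

/-- `i.cycleRange.symm` lists `i` first and then the other indices in increasing order. -/
theorem whitneyTerm_eq_prod_whitneyFactor (f : Fin (n + 1) → Fin (m + 1)) (i : Fin (n + 1)) :
    whitneyTerm K f i =
      (List.ofFn fun k =>
        whitneyFactor K i (i.cycleRange.symm k) (f (i.cycleRange.symm k))).prod := by
  rw [whitneyTerm, List.eraseIdx_ofFn]
  simp [whitneyFactor, List.ofFn_succ, Fin.succAbove_ne]

theorem pullback_whitneyFactor (g : Fin (p + 1) → Fin (m + 1)) (i j : Fin (n + 1))
    (a : Fin (m + 1)) :
    pullback K g (whitneyFactor K i j a) = ∑ b with g b = a, whitneyFactor K i j b := by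
  unfold whitneyFactor
  split_ifs
  · rw [pullback_algebraMap, pullbackPoly_xC, map_sum]
  · exact pullback_dX K g a

theorem pullback_whitneyTerm (f : Fin (n + 1) → Fin (m + 1)) (g : Fin (p + 1) → Fin (m + 1))
    (i : Fin (n + 1)) :
    pullback K g (whitneyTerm K f i) =
      ∑ h ∈ Fintype.piFinset fun j => {b | g b = f j}, whitneyTerm K h i := by
  rw [whitneyTerm_eq_prod_whitneyFactor, ← pullbackRingHom_apply, map_list_prod, List.map_ofFn]
  simp only [Function.comp_def, pullbackRingHom_apply, pullback_whitneyFactor,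
    whitneyTerm_eq_prod_whitneyFactor]
  exact List.prod_ofFn_sum_comp_equiv i.cycleRange.symm (fun j => {b | g b = f j})
    (whitneyFactor K i)

theorem pullback_omegaF (f : Fin (n + 1) → Fin (m + 1)) (g : Fin (p + 1) → Fin (m + 1)) :
    pullback K g (omegaF K f) =
      ∑ h ∈ Fintype.piFinset fun j => {b | g b = f j}, omegaF K h := by
  simp only [omegaF_eq_sum_whitneyTerm, ← pullbackRingHom_apply, map_nsmul, map_sum, map_zsmul]
  simp only [pullbackRingHom_apply, pullback_whitneyTerm, Finset.smul_sum]
  rw [Finset.sum_comm]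

end Whitney

set_option synthInstance.maxHeartbeats 1000000 in
open scoped Classical in
theorem stmt10_general (K : Type) [Field K] (n m p : ℕ)
    (f : Fin (n + 1) → Fin (m + 1)) (hf : Monotone f)
    (hfinj : Function.Injective f)
    (g : Fin (p + 1) → Fin (m + 1)) (hg : Monotone g) :
    pullback K g (omegaF K f) =
      ∑ h ∈ Finset.univ.filter
          (fun h : Fin (n + 1) → Fin (p + 1) => Monotone h ∧ g ∘ h = f),
        omegaF K h := by
  have hlifts : Finset.univ.filter (fun h => Monotone h ∧ g ∘ h = f) =
      Fintype.piFinset fun j => {b | g b = f j} := by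
    ext h
    simp only [Finset.mem_filter, Finset.mem_univ, true_and, Fintype.mem_piFinset, funext_iff,
      Function.comp_apply]
    refine ⟨And.right, fun hgh => ⟨?_, hgh⟩⟩
    refine (StrictMono.of_comp_of_monotone hg ?_).monotone
    simpa [Function.comp_def, hgh] using hf.strictMono_of_injective hfinj
  rw [pullback_omegaF, hlifts]

set_option synthInstance.maxHeartbeats 1000000 in
open scoped Classical in
/-- Let `f : [n] → [m]` be an injective monotone (hence strictly increasing)
map. Then for every monotone map `g : [p] → [m]`, the pullback of the Whitney
elementary form `ω_f` along `g` is `g*ω_f = Σ_h ω_h` in `Ω_p`, the sum running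
over all monotone maps `h : [n] → [p]` with `g ∘ h = f`. -/
theorem stmt10 (K : Type) [Field K] [CharZero K] (n m p : ℕ)
    (f : Fin (n + 1) → Fin (m + 1)) (hf : Monotone f)
    (hfinj : Function.Injective f)
    (g : Fin (p + 1) → Fin (m + 1)) (hg : Monotone g) :
    pullback K g (omegaF K f) =
      ∑ h ∈ Finset.univ.filter
          (fun h : Fin (n + 1) → Fin (p + 1) => Monotone h ∧ g ∘ h = f),
        omegaF K h :=
  stmt10_general K n m p f hf hfinj g hg
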